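/- arXiv:2310.00903 — 2 statements merged into one kernel-verified Lean document; each statement's English description precedes it below -/
import Mathlib

section
/- The A-module F = C^{Zⁿ} is a cogenerator: for every nonzero A-module M, Hom_A(M, F) ≠ 0. -/
noncomputable section

/-- `A n` is the Laurent polynomial ring `ℂ[σ₁,σ₁⁻¹,…,σₙ,σₙ⁻¹]`. -/
abbrev A (n : ℕ) : Type := AddMonoidAlgebra ℂ (Fin n → ℤ)

/-- `F n` is the space of all complex valued functions on the lattice `ℤⁿ`. -/
abbrev F (n : ℕ) : Type := (Fin n → ℤ) → ℂ

/-- The shift `σ^y` acts on functions by translation: `(σ^y f)(x) = f (x + y)`. -/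
def shiftHom (n : ℕ) : Multiplicative (Fin n → ℤ) →* Module.End ℂ (F n) where
  toFun y :=
    { toFun := fun f x => f (x + y.toAdd)
      map_add' := fun _ _ => rfl
      map_smul' := fun _ _ => rfl }
  map_one' := by ext f x; simp
  map_mul' y w := by
    ext f x
    simp [Module.End.mul_apply, add_assoc]

/-- The `A`-module structure on `F` by shifts. -/
instance moduleAF (n : ℕ) : Module (A n) (F n) :=
  Module.compHom (F n)
    ((AddMonoidAlgebra.lift ℂ (Module.End ℂ (F n)) (Fin n → ℤ) (shiftHom n)).toRingHom)

lemma smul_def' {n : ℕ} (a : A n) (f : F n) (x : Fin n → ℤ) :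
    (a • f) x = a.coeff.sum fun y c => c * f (x + y) := by
  show (AddMonoidAlgebra.lift ℂ (Module.End ℂ (F n)) (Fin n → ℤ) (shiftHom n)) a f x = _
  rw [AddMonoidAlgebra.lift_apply]
  simp [Finsupp.sum, shiftHom, smul_eq_mul]


/-! Under `F ≅ Hom_ℂ(A, ℂ)`, a `ℂ`-linear functional `λ` on `M` gives the `A`-linear map
`m ↦ (x ↦ λ (σ^x m))` into `F`, whose value at `0` is `λ m`. A nonzero `M` has a functional with
`λ m ≠ 0` for some `m`. -/

open AddMonoidAlgebra

variable {n : ℕ}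

lemma single_smul_apply (y : Fin n → ℤ) (c : ℂ) (f : F n) (x : Fin n → ℤ) :
    (single y c • f) x = c * f (x + y) := by
  simp [smul_def', Finsupp.sum_single_index]

section orbitMap

variable (n) {M : Type*} [AddCommGroup M] [Module (A n) M] [Module ℂ M]
  [IsScalarTower ℂ (A n) M]

def orbitMap (lam : M →ₗ[ℂ] ℂ) : M →ₗ[A n] F n where
  toFun m x := lam ((single x 1 : A n) • m)
  map_add' m m' := by
    ext x
    simp only [smul_add, map_add, Pi.add_apply]
  map_smul' a m := by
    ext x
    induction a using AddMonoidAlgebra.induction_linear with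
    | zero => simp
    | add a b ha hb => simp [add_smul, ha, hb]
    | single y c =>
      rw [RingHom.id_apply, single_smul_apply, smul_smul, single_mul_single, mul_comm 1 c,
        ← smul_single', smul_assoc, map_smul, smul_eq_mul]

lemma orbitMap_apply_zero (lam : M →ₗ[ℂ] ℂ) (m : M) : orbitMap n lam m 0 = lam m := by
  simp [orbitMap, ← one_def]

end orbitMap

/-- `F = ℂ^{ℤⁿ}` with the shift action is a cogenerator for the category of
`A`-modules: every nonzero `A`-module admits a nonzero `A`-linear map to `F`. -/
theorem functions_cogenerator (n : ℕ) (M : Type) [AddCommGroup M] [Module (A n) M]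
    (hM : Nontrivial M) : ∃ φ : M →ₗ[A n] F n, φ ≠ 0 := by
  let _ : Module ℂ M := Module.compHom M (algebraMap ℂ (A n))
  have : IsScalarTower ℂ (A n) M := .of_algebraMap_smul fun _ _ => rfl
  obtain ⟨m, hm⟩ := exists_ne (0 : M)
  obtain ⟨lam, hlam⟩ := Module.Projective.exists_dual_ne_zero ℂ hm
  refine ⟨orbitMap n lam, fun h => hlam ?_⟩
  rw [← orbitMap_apply_zero n lam m, h]
  rfl
end
end

section
/- Let G be a finite subgroup of (C*)ⁿ acting on A by homotheties, and P a G-invariant submodule of A^k with dim_C(A^k/P) finite. Then the dimension of the space of G-invariant solutions Ker_F(P)^G equals (1/|G|)·dim_C(A^k/P). -/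
noncomputable section

lemma smul_comm' {n : ℕ} (a : A n) (c : ℂ) (f : F n) : a • (c • f) = c • (a • f) := by
  funext x
  rw [Pi.smul_apply, smul_eq_mul, smul_def', smul_def', Finsupp.mul_sum]
  refine Finsupp.sum_congr ?_
  intro y _
  rw [Pi.smul_apply, smul_eq_mul]
  ring

/-- The monoid hom sending `σ^y` to `(∏ᵢ ζᵢ^{yᵢ}) σ^y`. -/
def homHom {n : ℕ} (ζ : Fin n → ℂˣ) : Multiplicative (Fin n → ℤ) →* A n where
  toFun y := AddMonoidAlgebra.single y.toAdd ((∏ i, ζ i ^ (y.toAdd i) : ℂˣ) : ℂ)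
  map_one' := by
    simp [AddMonoidAlgebra.one_def]
  map_mul' y w := by
    simp [AddMonoidAlgebra.single_mul_single, zpow_add, Finset.prod_mul_distrib]

/-- The homothety algebra endomorphism `σ^x ↦ ζ^x σ^x` of the Laurent ring. -/
def actU {n : ℕ} (ζ : Fin n → ℂˣ) : A n →ₐ[ℂ] A n :=
  AddMonoidAlgebra.lift ℂ (A n) (Fin n → ℤ) (homHom ζ)

/-- The extension of `f : ℤⁿ → ℂ` to a linear functional on `A`. -/
def fext {n : ℕ} (f : F n) (a : A n) : ℂ := a.coeff.sum fun y c => c * f y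

lemma fext_add {n : ℕ} (f g : F n) (a : A n) :
    fext (f + g) a = fext f a + fext g a := by
  simp [fext, mul_add, Finsupp.sum_add]

lemma fext_smul {n : ℕ} (c : ℂ) (f : F n) (a : A n) :
    fext (c • f) a = c * fext f a := by
  rw [fext, fext, Finsupp.mul_sum]
  refine Finsupp.sum_congr ?_
  intro y _
  rw [Pi.smul_apply, smul_eq_mul]
  ring

/-- The space of `G`-symmetric solutions to the system `P`: solutions `f` of `P`
each of whose components is invariant under the dual action of `G`. -/
def solG (n k : ℕ) (G : Subgroup (Fin n → ℂˣ)) (P : Submodule (A n) (Fin k → A n)) :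
    Submodule ℂ (Fin k → F n) where
  carrier := {f | (∀ p ∈ P, (∑ j, p j • f j) = 0) ∧
    ∀ ζ ∈ G, ∀ (j : Fin k) (a : A n), fext (f j) (actU ζ a) = fext (f j) a}
  add_mem' := by
    intro f g hf hg
    constructor
    · intro p hp
      have h1 := hf.1 p hp
      have h2 := hg.1 p hp
      simp only [Pi.add_apply, smul_add, Finset.sum_add_distrib, h1, h2, add_zero]
    · intro ζ hζ j a
      simp only [Pi.add_apply, fext_add, hf.2 ζ hζ j a, hg.2 ζ hζ j a]
  zero_mem' := by
    refine ⟨by intro p _; simp, ?_⟩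
    intro ζ hζ j a
    simp [fext]
  smul_mem' := by
    intro c f hf
    constructor
    · intro p hp
      have h1 := hf.1 p hp
      simp only [Pi.smul_apply, smul_comm', ← Finset.smul_sum, h1, smul_zero]
    · intro ζ hζ j a
      simp only [Pi.smul_apply, fext_smul, hf.2 ζ hζ j a]


/-!
Identify `Fin k → F n` with the dual of `A^k` via `f ↦ (p ↦ ∑ⱼ fext (f j) (p j))`. Solutions of
`P` become the functionals on `Q = A^k/P`, and the `G`-symmetric ones the `G`-invariant
functionals, so by character theory their dimension is `|G|⁻¹ ∑_g tr(g | Q)`.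
For `g ≠ 1` pick `i` with `gᵢ ≠ 1`: on `Q` we have `g σᵢ = gᵢ σᵢ g` with `σᵢ` invertible, so
`tr g = gᵢ tr g` and hence `tr g = 0`. Only `g = 1` contributes, giving `dim Q / |G|`.
-/

open Module Representation

theorem LinearMap.trace_eq_zero_of_mul_eq_smul_mul {K V : Type*} [Field K] [AddCommGroup V]
    [Module K V] [FiniteDimensional K V] {f s : Module.End K V} (hs : IsUnit s) {c : K}
    (hc : c ≠ 1) (h : f * s = c • (s * f)) : LinearMap.trace K V f = 0 := by
  obtain ⟨u, rfl⟩ := hs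
  have hconj : LinearMap.trace K V f = c * LinearMap.trace K V f :=
    calc LinearMap.trace K V f = LinearMap.trace K V (↑u⁻¹ * (f * u)) := by
          rw [LinearMap.trace_mul_comm, mul_assoc, u.mul_inv, mul_one]
      _ = c * LinearMap.trace K V (↑u⁻¹ * (u * f)) := by
          rw [h, mul_smul_comm, map_smul, smul_eq_mul]
      _ = c * LinearMap.trace K V f := by rw [← mul_assoc, u.inv_mul, one_mul]
  have : (c - 1) * LinearMap.trace K V f = 0 := by linear_combination -hconj
  exact (mul_eq_zero.mp this).resolve_left (sub_ne_zero.mpr hc)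

namespace Representation

variable {G V : Type*} [Group G] [AddCommGroup V]

section CommRing

variable {k : Type*} [CommRing k] [Module k V]

theorem mem_invariants_dual_iff (ρ : Representation k G V) (ψ : Module.Dual k V) :
    ψ ∈ invariants ρ.dual ↔ ∀ g, ψ ∘ₗ ρ g = ψ :=
  ⟨fun h g => by simpa [Dual.transpose_apply] using h g⁻¹, fun h g => h g⁻¹⟩

theorem map_dualMap_mkQ_invariants_dual (ρ : Representation k G V) (W : Submodule k V)
    (hW : ∀ g, W ≤ W.comap (ρ g)) :
    (invariants (ρ.quotient W hW).dual).map W.mkQ.dualMap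
      = W.dualAnnihilator ⊓ invariants ρ.dual := by
  ext ψ
  simp only [Submodule.mem_map, Submodule.mem_inf, mem_invariants_dual_iff]
  constructor
  · rintro ⟨φ, hφ, rfl⟩
    refine ⟨W.range_dualMap_mkQ_eq ▸ LinearMap.mem_range_self _ φ, fun g => ?_⟩
    ext v
    simpa using LinearMap.congr_fun (hφ g) (Submodule.Quotient.mk v)
  · rintro ⟨hψW, hψ⟩
    obtain ⟨φ, rfl⟩ := W.range_dualMap_mkQ_eq ▸ hψW
    refine ⟨φ, fun g => Submodule.linearMap_qext _ (LinearMap.ext fun v => ?_), rfl⟩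
    simpa using LinearMap.congr_fun (hψ g) v

def invariantsDualQuotientEquiv (ρ : Representation k G V) (W : Submodule k V)
    (hW : ∀ g, W ≤ W.comap (ρ g)) :
    invariants (ρ.quotient W hW).dual ≃ₗ[k] ↥(W.dualAnnihilator ⊓ invariants ρ.dual) :=
  Submodule.equivMapOfInjective _
      (LinearMap.dualMap_injective_of_surjective W.mkQ_surjective) _ ≪≫ₗ
    LinearEquiv.ofEq _ _ (map_dualMap_mkQ_invariants_dual ρ W hW)

end CommRing

theorem card_mul_finrank_invariants_dual {k : Type*} [Field k] [CharZero k] [Module k V]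
    [FiniteDimensional k V] [Fintype G] (ρ : Representation k G V)
    (hρ : ∀ g ≠ 1, ρ.character g = 0) :
    Nat.card G * finrank k (invariants ρ.dual) = finrank k V := by
  have hG : (Nat.card G : k) ≠ 0 := Nat.cast_ne_zero.mpr Nat.card_pos.ne'
  have : Invertible (Nat.card G : k) := invertibleOfNonzero hG
  have hsum : ∑ g, ρ.dual.character g = finrank k V := by
    rw [Finset.sum_eq_single 1 (fun g _ hg => by simpa using hρ g⁻¹ (inv_ne_one.mpr hg))
      (by simp), char_dual, inv_one, char_one]
  have h := ρ.dual.card_inv_mul_sum_char_eq_finrank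
  rw [hsum, inv_mul_eq_iff_eq_mul₀ hG] at h
  exact_mod_cast h.symm

end Representation

variable {n k : ℕ}

theorem actU_single (ζ : Fin n → ℂˣ) (y : Fin n → ℤ) (c : ℂ) :
    actU ζ (AddMonoidAlgebra.single y c)
      = AddMonoidAlgebra.single y (c * ((∏ i, ζ i ^ y i : ℂˣ) : ℂ)) := by
  rw [actU, AddMonoidAlgebra.lift_single]
  simp [homHom]

theorem actU_one : actU (1 : Fin n → ℂˣ) = AlgHom.id ℂ (A n) :=
  AddMonoidAlgebra.algHom_ext (fun y => by simp [actU_single]) (Subsingleton.elim _ _)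

theorem actU_mul (ζ ζ' : Fin n → ℂˣ) : actU (ζ * ζ') = (actU ζ).comp (actU ζ') :=
  AddMonoidAlgebra.algHom_ext
    (fun y => by simp [actU_single, mul_zpow, Finset.prod_mul_distrib, mul_comm])
    (Subsingleton.elim _ _)

/-- The Laurent variable `σᵢ`. -/
def laurentVar (i : Fin n) : A n := AddMonoidAlgebra.single (Pi.single i 1) 1

theorem isUnit_laurentVar (i : Fin n) : IsUnit (laurentVar i) :=
  isUnit_iff_exists_inv.mpr ⟨AddMonoidAlgebra.single (-Pi.single i 1) 1, by
    rw [laurentVar, AddMonoidAlgebra.single_mul_single, add_neg_cancel, one_mul,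
      AddMonoidAlgebra.one_def]⟩

theorem actU_laurentVar (ζ : Fin n → ℂˣ) (i : Fin n) :
    actU ζ (laurentVar i) = (ζ i : ℂ) • laurentVar i := by
  rw [laurentVar, actU_single, AddMonoidAlgebra.smul_single', Finset.prod_eq_single i]
  · simp [mul_comm]
  · intro j _ hj
    rw [Pi.single_eq_of_ne hj, zpow_zero]
  · simp

variable (n k)

def homothetyRep : Representation ℂ (Fin n → ℂˣ) (Fin k → A n) where
  toFun ζ := LinearMap.piMap fun _ => (actU ζ).toLinearMap
  map_one' := by ext; simp [actU_one]
  map_mul' ζ ζ' := by ext; simp [actU_mul]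

def mulRep : Representation ℂ (A n) (Fin k → A n) :=
  DistribMulAction.toModuleEnd ℂ (Fin k → A n)

variable {n k}

theorem homothetyRep_apply (ζ : Fin n → ℂˣ) (p : Fin k → A n) :
    homothetyRep n k ζ p = fun j => actU ζ (p j) :=
  rfl

theorem homothetyRep_single (ζ : Fin n → ℂˣ) (j : Fin k) (a : A n) :
    homothetyRep n k ζ (Pi.single j a) = Pi.single j (actU ζ a) :=
  funext <| Pi.apply_single (fun _ => actU ζ) (fun _ => map_zero _) j a

theorem homothetyRep_mul_mulRep_laurentVar (ζ : Fin n → ℂˣ) (i : Fin n) :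
    homothetyRep n k ζ * mulRep n k (laurentVar i)
      = (ζ i : ℂ) • (mulRep n k (laurentVar i) * homothetyRep n k ζ) := by
  ext p j
  simp [homothetyRep, mulRep, actU_laurentVar]

section Quotient

variable (G : Subgroup (Fin n → ℂˣ)) (P : Submodule (A n) (Fin k → A n))
  (hinv : ∀ ζ ∈ G, ∀ p ∈ P, (fun j => actU ζ (p j)) ∈ P)

def homothetyQuotRep : Representation ℂ G ((Fin k → A n) ⧸ P.restrictScalars ℂ) :=
  Representation.quotient ((homothetyRep n k).comp G.subtype) _ fun g _ hp => hinv g g.2 _ hp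

def mulQuotRep : Representation ℂ (A n) ((Fin k → A n) ⧸ P.restrictScalars ℂ) :=
  Representation.quotient (mulRep n k) _ fun a _ hp => P.smul_mem a hp

theorem homothetyQuotRep_mk (g : G) (p : Fin k → A n) :
    homothetyQuotRep G P hinv g (Submodule.Quotient.mk p)
      = Submodule.Quotient.mk (homothetyRep n k g p) :=
  rfl

theorem mulQuotRep_mk (a : A n) (p : Fin k → A n) :
    mulQuotRep P a (Submodule.Quotient.mk p) = Submodule.Quotient.mk (mulRep n k a p) :=
  rfl

theorem character_homothetyQuotRep_eq_zero
    [FiniteDimensional ℂ ((Fin k → A n) ⧸ P.restrictScalars ℂ)] (g : G) (hg : g ≠ 1) :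
    (homothetyQuotRep G P hinv).character g = 0 := by
  obtain ⟨i, hi⟩ : ∃ i, (g : Fin n → ℂˣ) i ≠ 1 := by
    by_contra! h
    exact hg (Subtype.ext (funext h))
  refine LinearMap.trace_eq_zero_of_mul_eq_smul_mul
    ((isUnit_laurentVar i).map (mulQuotRep P)) (Units.val_eq_one.not.mpr hi) ?_
  refine Submodule.linearMap_qext _ (LinearMap.ext fun p => ?_)
  simpa [homothetyQuotRep_mk, mulQuotRep_mk, ← Submodule.Quotient.mk_smul] using
    congrArg Submodule.Quotient.mk
      (LinearMap.congr_fun (homothetyRep_mul_mulRep_laurentVar (k := k) g.1 i) p)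

end Quotient

variable (n k) in
def dualityEquiv : (Fin k → F n) ≃ₗ[ℂ] Module.Dual ℂ (Fin k → A n) :=
  LinearEquiv.piCongrRight (fun _ => (AddMonoidAlgebra.basis (Fin n → ℤ) ℂ).constr ℂ) ≪≫ₗ
    LinearMap.lsum ℂ (fun _ => A n) ℂ

theorem dualityEquiv_apply (f : Fin k → F n) (p : Fin k → A n) :
    dualityEquiv n k f p = ∑ j, fext (f j) (p j) := by
  simp only [dualityEquiv, LinearEquiv.trans_apply, LinearMap.lsum_apply,
    LinearEquiv.piCongrRight_apply, LinearMap.coe_sum, LinearMap.coe_comp, LinearMap.coe_proj,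
    Finset.sum_apply, Function.comp_apply, Function.eval, Basis.constr_apply, smul_eq_mul]
  rfl

theorem dualityEquiv_single (f : Fin k → F n) (j : Fin k) (a : A n) :
    dualityEquiv n k f (Pi.single j a) = fext (f j) a := by
  rw [dualityEquiv_apply, Finset.sum_eq_single j
    (fun i _ hi => by simp [Pi.single_eq_of_ne hi, fext]) (by simp), Pi.single_eq_same]

theorem fext_eq_smul_apply_zero (f : F n) (a : A n) : fext f a = (a • f) 0 := by
  simp [smul_def', fext]

theorem fext_single_mul (f : F n) (a : A n) (x : Fin n → ℤ) :
    fext f (AddMonoidAlgebra.single x 1 * a) = (a • f) x := by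
  rw [fext_eq_smul_apply_zero, mul_smul, smul_def', AddMonoidAlgebra.coeff_single,
    Finsupp.sum_single_index (by simp), zero_add, one_mul]

theorem dualityEquiv_single_smul (f : Fin k → F n) (p : Fin k → A n) (x : Fin n → ℤ) :
    dualityEquiv n k f ((AddMonoidAlgebra.single x 1 : A n) • p) = (∑ j, p j • f j) x := by
  simp [dualityEquiv_apply, fext_single_mul]

theorem solves_iff_mem_dualAnnihilator (P : Submodule (A n) (Fin k → A n)) (f : Fin k → F n) :
    (∀ p ∈ P, ∑ j, p j • f j = 0)
      ↔ dualityEquiv n k f ∈ (P.restrictScalars ℂ).dualAnnihilator := by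
  simp only [Submodule.mem_dualAnnihilator, Submodule.restrictScalars_mem]
  refine ⟨fun h p hp => ?_, fun h p hp => funext fun x => ?_⟩
  · rw [← one_smul (A n) p, AddMonoidAlgebra.one_def, dualityEquiv_single_smul, h p hp]
    rfl
  · rw [← dualityEquiv_single_smul]
    exact h _ (P.smul_mem _ hp)

theorem fext_actU_iff (f : Fin k → F n) (ζ : Fin n → ℂˣ) :
    (∀ j a, fext (f j) (actU ζ a) = fext (f j) a)
      ↔ dualityEquiv n k f ∘ₗ homothetyRep n k ζ = dualityEquiv n k f := by
  refine ⟨fun h => LinearMap.ext fun p => ?_, fun h j a => ?_⟩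
  · simp [dualityEquiv_apply, homothetyRep_apply, h]
  · simpa [dualityEquiv_single, homothetyRep_single] using LinearMap.congr_fun h (Pi.single j a)

theorem solG_eq_comap_dualityEquiv (G : Subgroup (Fin n → ℂˣ))
    (P : Submodule (A n) (Fin k → A n)) :
    solG n k G P = ((P.restrictScalars ℂ).dualAnnihilator
      ⊓ invariants (Representation.dual ((homothetyRep n k).comp G.subtype))).comap
        (dualityEquiv n k).toLinearMap := by
  ext f
  simp only [Submodule.mem_comap, Submodule.mem_inf, mem_invariants_dual_iff,
    MonoidHom.comp_apply, Subgroup.coe_subtype, LinearEquiv.coe_coe, ← fext_actU_iff,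
    ← solves_iff_mem_dualAnnihilator, Subtype.forall]
  rfl

/-- For a finite subgroup `G ⊆ (ℂ*)ⁿ` acting on `A` by homotheties and a
`G`-invariant submodule `P ⊆ A^k` with `dim_ℂ(A^k/P)` finite, the space of
`G`-invariant solutions has dimension `(1/|G|)·dim_ℂ(A^k/P)`. -/
theorem symmetric_solution_dimension (n k : ℕ)
    (G : Subgroup (Fin n → ℂˣ)) [Finite G]
    (P : Submodule (A n) (Fin k → A n))
    (hinv : ∀ ζ ∈ G, ∀ p ∈ P, (fun j => actU ζ (p j)) ∈ P)
    (hfd : FiniteDimensional ℂ ((Fin k → A n) ⧸ P)) :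
    Nat.card G * Module.finrank ℂ ↥(solG n k G P)
      = Module.finrank ℂ ((Fin k → A n) ⧸ P) := by
  have : Fintype G := Fintype.ofFinite G
  have : FiniteDimensional ℂ ((Fin k → A n) ⧸ P.restrictScalars ℂ) :=
    Module.Finite.equiv (Submodule.Quotient.restrictScalarsEquiv ℂ P).symm
  calc Nat.card G * finrank ℂ (solG n k G P)
      = Nat.card G * finrank ℂ (invariants (homothetyQuotRep G P hinv).dual) := by
        rw [solG_eq_comap_dualityEquiv, ((dualityEquiv n k).ofSubmodule' _).finrank_eq,
          ← (invariantsDualQuotientEquiv _ _ _).finrank_eq]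
        rfl
    _ = finrank ℂ ((Fin k → A n) ⧸ P.restrictScalars ℂ) :=
        card_mul_finrank_invariants_dual _ (character_homothetyQuotRep_eq_zero G P hinv)
    _ = finrank ℂ ((Fin k → A n) ⧸ P) :=
        (Submodule.Quotient.restrictScalarsEquiv ℂ P).finrank_eq
end
end
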